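/- Let S = ⟨β̄₀, β̄₁, …, β̄_g⟩ ⊆ ℕ be a numerical semigroup generated by positive integers with β̄₀ < β̄₁, and set e_i = gcd(β̄₀,…,β̄_i), n_i = e_{i−1}/e_i. If n_i·β̄_i < β̄_{i+1} and n_i·β̄_i ∈ ⟨β̄₀,…,β̄_{i−1}⟩ for all admissible i, and n_i > 1 for all 1 ≤ i ≤ g, then the generators β̄₀,…,β̄_g form a minimal generating set of S, i.e. no β̄_j lies in the semigroup generated by the others. -/

import Mathlib

/-!
Since `n_i > 1`, the `β̄_i` increase strictly, so a representation of `β̄_j` by the other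
generators can only involve `β̄_0, …, β̄_{j-1}`. Then `e_{j-1}` divides `β̄_j`, hence
`e_j = gcd(e_{j-1}, β̄_j) = e_{j-1}`, i.e. `n_j = 1`, a contradiction.
-/

theorem AddSubmonoid.mem_closure_inter_Iic {M : Type*} [AddCommMonoid M] [PartialOrder M]
    [CanonicallyOrderedAdd M] {s : Set M} {x : M} (hx : x ∈ closure s) :
    x ∈ closure (s ∩ Set.Iic x) := by
  induction hx using closure_induction with
  | mem y hy => exact subset_closure ⟨hy, le_rfl⟩
  | zero => exact zero_mem _
  | add y z _ _ hy hz =>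
    refine add_mem (closure_mono ?_ hy) (closure_mono ?_ hz) <;>
      exact Set.inter_subset_inter_right _ (Set.Iic_subset_Iic.mpr (by simp))

theorem AddSubmonoid.dvd_of_mem_closure {R : Type*} [CommSemiring R] {s : Set R} {d x : R}
    (hs : ∀ y ∈ s, d ∣ y) (hx : x ∈ closure s) : d ∣ x := by
  have : closure s ≤ (Ideal.span {d}).toAddSubmonoid :=
    closure_le.mpr fun y hy => Ideal.mem_span_singleton.mpr (hs y hy)
  exact Ideal.mem_span_singleton.mp (this hx)

theorem Finset.gcd_range_add_one_of_dvd {α : Type*} [CommMonoidWithZero α]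
    [NormalizedGCDMonoid α] {f : ℕ → α} {j : ℕ} (h : (range j).gcd f ∣ f j) :
    (range (j + 1)).gcd f = (range j).gcd f := by
  rw [range_add_one, gcd_insert, _root_.gcd_eq_right_iff _ _ normalize_gcd]
  exact h

theorem StrictMonoOn.mem_closure_lt_of_mem_closure_ne {M : Type*} [AddCommMonoid M]
    [PartialOrder M] [CanonicallyOrderedAdd M] {β : ℕ → M} {g j : ℕ}
    (hβ : StrictMonoOn β (Set.Iic g)) (hj : j ≤ g)
    (hmem : β j ∈ AddSubmonoid.closure {x | ∃ i, i ≤ g ∧ i ≠ j ∧ x = β i}) :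
    β j ∈ AddSubmonoid.closure {x | ∃ t, t < j ∧ x = β t} := by
  refine AddSubmonoid.closure_mono ?_ (AddSubmonoid.mem_closure_inter_Iic hmem)
  rintro _ ⟨⟨i, hig, hij, rfl⟩, hle⟩
  exact ⟨i, lt_of_le_of_ne ((hβ.le_iff_le hig hj).mp hle) hij, rfl⟩

theorem stmt7_general (g : ℕ) (β e nn : ℕ → ℕ)
    (hβpos : ∀ i, i ≤ g → 0 < β i)
    (hβ01 : β 0 < β 1)
    (he : ∀ i, i ≤ g → e i = Finset.gcd (Finset.range (i + 1)) β)
    (hn : ∀ i, 1 ≤ i → i ≤ g → nn i * e i = e (i - 1))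
    (hlt : ∀ i, 1 ≤ i → i + 1 ≤ g → nn i * β i < β (i + 1))
    (hn1 : ∀ i, 1 ≤ i → i ≤ g → 1 < nn i) :
    ∀ j, j ≤ g → β j ∉ AddSubmonoid.closure {x : ℕ | ∃ i, i ≤ g ∧ i ≠ j ∧ x = β i} := by
  have hmono : StrictMonoOn β (Set.Iic g) := by
    refine strictMonoOn_Iic_of_lt_succ fun i hi => ?_
    rcases Nat.eq_zero_or_pos i with rfl | hi0
    · exact hβ01
    · calc β i ≤ nn i * β i := Nat.le_mul_of_pos_left _ (one_pos.trans (hn1 i hi0 hi.le))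
        _ < β (i + 1) := hlt i hi0 hi
  intro j hj hmem
  have hlower := hmono.mem_closure_lt_of_mem_closure_ne hj hmem
  obtain rfl | hj0 := Nat.eq_zero_or_pos j
  · have hempty : {x : ℕ | ∃ t, t < 0 ∧ x = β t} = ∅ := by simp
    rw [hempty, AddSubmonoid.closure_empty, AddSubmonoid.mem_bot] at hlower
    exact (hβpos 0 hj).ne' hlower
  have hdvd : (Finset.range j).gcd β ∣ β j :=
    AddSubmonoid.dvd_of_mem_closure (by
      rintro _ ⟨t, ht, rfl⟩
      exact Finset.gcd_dvd (Finset.mem_range.mpr ht)) hlower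
  have hgcd_ne_zero : (Finset.range j).gcd β ≠ 0 := fun h0 => (hβpos 0 (Nat.zero_le g)).ne'
    (Finset.gcd_eq_zero_iff.mp h0 0 (Finset.mem_range.mpr hj0))
  have hnj := hn j hj0 hj
  rw [he j hj, he (j - 1) (by omega), Nat.sub_add_cancel hj0,
    Finset.gcd_range_add_one_of_dvd hdvd, mul_eq_right₀ hgcd_ne_zero] at hnj
  exact (hn1 j hj0 hj).ne' hnj

/-- The maximal contact values `β̄₀, …, β̄_g` minimally generate the value
semigroup `S = ⟨β̄₀,…,β̄_g⟩`: no `β̄_j` lies in the submonoid generated by the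
other generators. -/
theorem stmt7 (g : ℕ) (β e nn : ℕ → ℕ)
    (hβpos : ∀ i, i ≤ g → 0 < β i)
    (hβ01 : β 0 < β 1)
    (he : ∀ i, i ≤ g → e i = Finset.gcd (Finset.range (i + 1)) β)
    (hn : ∀ i, 1 ≤ i → i ≤ g → nn i * e i = e (i - 1))
    (hlt : ∀ i, 1 ≤ i → i + 1 ≤ g → nn i * β i < β (i + 1))
    (hmem : ∀ i, 1 ≤ i → i ≤ g →
      nn i * β i ∈ AddSubmonoid.closure {x : ℕ | ∃ t, t < i ∧ x = β t})
    (hn1 : ∀ i, 1 ≤ i → i ≤ g → 1 < nn i) :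
    ∀ j, j ≤ g → β j ∉ AddSubmonoid.closure {x : ℕ | ∃ i, i ≤ g ∧ i ≠ j ∧ x = β i} :=
  stmt7_general g β e nn hβpos hβ01 he hn hlt hn1
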